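/- arXiv:2407.03464 — 7 statements merged into one kernel-verified Lean document; each statement's English description precedes it below -/
import Mathlib

section
/- Fix ζ ∈ ℝ and δ ∈ (0, 1/8). Then there exist constants C > 0 and b₀ ∈ (0,1) such that for all b ∈ (0, b₀) and all t ∈ ℂ with Im t ∈ (−1/2 + δ, −2δ): |E(b², t)| ≤ C·b². -/
open MeasureTheory

noncomputable section

/-- The dilogarithm `Li₂(z) = -∫₀¹ Log(1 - t z) dt / t` (principal branch of `Log`). -/
def Li2 (z : ℂ) : ℂ := -∫ t in (0:ℝ)..1, Complex.log (1 - (t:ℂ) * z) / (t:ℂ)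

/-- Negative-index polylogarithms: `LiNeg m = Li_{-m}`, with `Li₀(w) = w/(1-w)` and
`Li_{-m}(w) = w ⬝ d/dw Li_{-m+1}(w)`. -/
def LiNeg : ℕ → ℂ → ℂ
  | 0 => fun w => w / (1 - w)
  | (m+1) => fun w => w * deriv (LiNeg m) w

/-- `LiIdx n = Li_{2-2n}`: the dilogarithm for `n = 0`, and `Li_{-(2n-2)}` for `n ≥ 1`. -/
def LiIdx (n : ℕ) : ℂ → ℂ := if n = 0 then Li2 else LiNeg (2*n - 2)

/-- `L_b(z) = i ∫₀^∞ ( sin(2yz)/(2 sinh(y/b) sinh(by)) - z/y ) dy/y`. -/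
def Lb (b : ℝ) (z : ℂ) : ℂ :=
  Complex.I * ∫ y in Set.Ioi (0:ℝ),
    (Complex.sin (2 * (y:ℂ) * z) / (2 * (Real.sinh (y / b) : ℂ) * (Real.sinh (b * y) : ℂ))
      - z / (y:ℂ)) / (y:ℂ)

/-- Ruijsenaars' hyperbolic gamma function `s_b(z) = exp(L_b(z))`. -/
def sb (b : ℝ) (z : ℂ) : ℂ := Complex.exp (Lb b z)

/-- `Q = b + b⁻¹` as a complex number. -/
def Qb (b : ℝ) : ℂ := (b:ℂ) + (b:ℂ)⁻¹

/-- The function `𝓜(b, ζ', ω')`, the contour being the horizontal line `Im = -Q/4`. -/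
def Mfun (b : ℝ) (ζ : ℝ) (ω : ℂ) : ℂ :=
  sb b ζ * ∫ x : ℝ,
    Complex.exp (Complex.I * (Real.pi:ℂ) * ((x:ℂ) - Complex.I * Qb b / 4)
        * ((ζ:ℂ) - Complex.I * Qb b / 2 + 2 * ω)) *
      sb b ((x:ℂ) - Complex.I * Qb b / 4 - (ζ:ℂ))
        / sb b ((x:ℂ) - Complex.I * Qb b / 4 + Complex.I * Qb b / 2)

/-- The exponent `f_𝓜(ζ, ω)`. -/
def fM (ζ : ℝ) (ω : ℂ) : ℂ :=
  -(Li2 (-Complex.exp (2 * (Real.pi:ℂ) * (ζ:ℂ)))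
    + Li2 (-(Complex.exp (-((Real.pi:ℂ) * (ζ:ℂ))) * Complex.cosh ((Real.pi:ℂ) * ω)
        / Complex.sinh ((Real.pi:ℂ) * ((ζ:ℂ) + ω))))
    - Li2 (Complex.exp ((Real.pi:ℂ) * (ζ:ℂ)) * Complex.cosh ((Real.pi:ℂ) * ω)
        / Complex.sinh ((Real.pi:ℂ) * ((ζ:ℂ) + ω))))
    / (2 * (Real.pi:ℂ) * Complex.I)
  + Complex.I * (Real.pi:ℂ) * (ζ:ℂ)^2
  + Complex.I * (ω - Complex.I / 2) *
      Complex.log (Complex.exp ((Real.pi:ℂ) * (ζ:ℂ)) * Complex.cosh ((Real.pi:ℂ) * ω)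
        / Complex.sinh ((Real.pi:ℂ) * ((ζ:ℂ) + ω)))
  + Complex.I * (Real.pi:ℂ) / 6

/-- The function `𝓠(b, σ', μ')`, the contour being the horizontal line `Im = -3Q/8`. -/
def Qfun (b : ℝ) (σ μ : ℝ) : ℂ :=
  Complex.exp (Complex.I * (Real.pi:ℂ) *
      (1/6 + 7 * (Qb b)^2 / 24 - (μ:ℂ)^2/2 + Complex.I * (μ:ℂ) * Qb b - (σ:ℂ)^2)) * sb b μ *
  ∫ x : ℝ,
    Complex.exp (-(Complex.I * (Real.pi:ℂ) * ((x:ℂ) - 3 * Complex.I * Qb b / 8)^2)) *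
    Complex.exp (2 * Complex.I * (Real.pi:ℂ) * ((x:ℂ) - 3 * Complex.I * Qb b / 8)
      * ((μ:ℂ) - Complex.I * Qb b / 2)) *
    sb b ((x:ℂ) - 3 * Complex.I * Qb b / 8 + (σ:ℂ)) *
    sb b ((x:ℂ) - 3 * Complex.I * Qb b / 8 - (σ:ℂ))

/-- The exponent `f_𝓠(σ, μ)`. -/
def fQ (σ μ : ℝ) : ℂ :=
  -(Li2 (-Complex.exp (2 * (Real.pi:ℂ) * (μ:ℂ)))) / (2 * (Real.pi:ℂ) * Complex.I)
  - Li2 (Complex.exp (-(2 * (Real.pi:ℂ) * (σ:ℂ))) *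
      ((Real.cosh (2*Real.pi*σ) : ℂ) + Complex.I *
        (Real.sqrt (Real.exp (2*Real.pi*μ) - Real.sinh (2*Real.pi*σ)^2) : ℂ)))
    / (2 * (Real.pi:ℂ) * Complex.I)
  - Li2 (Complex.exp (2 * (Real.pi:ℂ) * (σ:ℂ)) *
      ((Real.cosh (2*Real.pi*σ) : ℂ) + Complex.I *
        (Real.sqrt (Real.exp (2*Real.pi*μ) - Real.sinh (2*Real.pi*σ)^2) : ℂ)))
    / (2 * (Real.pi:ℂ) * Complex.I)
  + (1/2 + Complex.I * (μ:ℂ)) *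
      Complex.log (-(Real.cosh (2*Real.pi*σ) : ℂ) - Complex.I *
        (Real.sqrt (Real.exp (2*Real.pi*μ) - Real.sinh (2*Real.pi*σ)^2) : ℂ))
  - (Real.pi:ℂ) * (μ:ℂ) + 5 * (Real.pi:ℂ) * Complex.I / 12

/-- The phase function `f(t)` of the saddle point analysis of `𝓜`. -/
def fMt (ζ : ℝ) (ω t : ℂ) : ℂ :=
  -(Li2 (-Complex.exp (2*(Real.pi:ℂ)*(ζ:ℂ)))
    + Li2 (-Complex.exp (2*(Real.pi:ℂ)*(t-(ζ:ℂ))))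
    - Li2 (-Complex.exp (2*(Real.pi:ℂ)*(t+Complex.I/2)))) / (2*(Real.pi:ℂ)*Complex.I)
  + Complex.I*(Real.pi:ℂ)*(ζ:ℂ)^2 + 2*Complex.I*(Real.pi:ℂ)*t*ω + (Real.pi:ℂ)*t
  + Complex.I*(Real.pi:ℂ)/6

/-- The amplitude `g(t)` of the saddle point analysis of `𝓜`. -/
def gM (t : ℂ) : ℂ :=
  Complex.exp ((Real.pi:ℂ)*t - Complex.log (1 - Complex.exp (2*(Real.pi:ℂ)*t)) / 2)

/-- The error term `E(τ, t)` from the semiclassical analysis of `𝓜`. -/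
def Efun (ζ τ : ℝ) (t : ℂ) : ℂ :=
  Complex.I * (Li2 (Complex.exp (2*(Real.pi:ℂ)*t))
      - Li2 (Complex.exp (Complex.I*(Real.pi:ℂ)*(τ:ℂ) + 2*(Real.pi:ℂ)*t))) / (2*(Real.pi:ℂ)*(τ:ℂ))
  + Complex.log (1 - Complex.exp (2*(Real.pi:ℂ)*t)) / 2
  + (Complex.I*(Real.pi:ℂ)*(τ:ℂ)/12) *
      (Complex.exp (2*(Real.pi:ℂ)*t + Complex.I*(Real.pi:ℂ)*(τ:ℂ))
          / (Complex.exp (2*(Real.pi:ℂ)*t + Complex.I*(Real.pi:ℂ)*(τ:ℂ)) - 1)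
        - Complex.exp (2*(Real.pi:ℂ)*(ζ:ℂ)) / (Complex.exp (2*(Real.pi:ℂ)*(ζ:ℂ)) + 1)
        - Complex.exp (2*(Real.pi:ℂ)*t)
          / (Complex.exp (2*(Real.pi:ℂ)*(ζ:ℂ)) + Complex.exp (2*(Real.pi:ℂ)*t)) + 2)

/-- The phase function `f(t)` of the saddle point analysis of `𝓠`. -/
def fQt (σ μ : ℝ) (t : ℂ) : ℂ :=
  -(Li2 (-Complex.exp (2*(Real.pi:ℂ)*(μ:ℂ)))
    + Li2 (-Complex.exp (2*(Real.pi:ℂ)*(t-(σ:ℂ))))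
    + Li2 (-Complex.exp (2*(Real.pi:ℂ)*(t+(σ:ℂ))))) / (2*(Real.pi:ℂ)*Complex.I)
  + 2*Complex.I*(Real.pi:ℂ)*(μ:ℂ)*t + (Real.pi:ℂ)*(t-(μ:ℂ)) + 5*Complex.I*(Real.pi:ℂ)/12

/-- The amplitude `g(t)` of the saddle point analysis of `𝓠`. -/
def gQ (μ : ℝ) (t : ℂ) : ℂ := Complex.exp ((Real.pi:ℂ)*(t-(μ:ℂ)))

end

/-!
With `c = 2πt` put `w(x) = exp (c + x i)`. Differentiating `Li₂(w(x)) = -∫₀¹ Log(1 - s w(x)) ds/s`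
under the integral sign gives `d/dx Li₂(w(x)) = -i Log(1 - w(x))`, so with `U = πτ` the first two
terms of `E(τ, t)` are the mean over `u ∈ [0, U]` of `(Log(1 - w(0)) - Log(1 - w(u)))/2`. Since
`d/du Log(1 - w(u)) = -i w/(1 - w)`, this mean is `O(U)` as soon as `|w/(1 - w)|` is bounded.

The strip condition on `Im t` keeps every `w(x)` with `|x| < πδ` in the sector
`2δ |z| ≤ -Im z` (Jordan's inequality `sin θ ≥ 2θ/π`). On that sector `1 - s z` avoids the
branch cut and stays at distance `≥ δ` from `0` for all `s ∈ [0, 1]`, `|z/(1 - z)| ≤ 1/(2δ)`,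
and the same bound holds for `e^{2πt}/(e^{2πζ} + e^{2πt})`. Hence `|E(τ, t)| ≤ C τ` for
`0 < τ < δ`, and `τ = b² < δ` for `b < δ`.
-/

open Complex Set Filter Topology
open scoped Real

def lowerSector (A : ℝ) : Set ℂ := {z | A * ‖z‖ ≤ -z.im}

lemma Real.two_div_pi_mul_le_sin {a x : ℝ} (ha : 0 ≤ a) (hx : x ∈ Icc a (π - a)) :
    2 / π * a ≤ Real.sin x := by
  rcases le_total x (π / 2) with h | h
  · exact (mul_le_mul_of_nonneg_left hx.1 (by positivity)).trans
      (Real.mul_le_sin (ha.trans hx.1) h)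
  · rw [← Real.sin_pi_sub]
    exact (mul_le_mul_of_nonneg_left (by linarith [hx.2]) (by positivity)).trans
      (Real.mul_le_sin (by linarith [hx.2]) (by linarith))

lemma exp_mem_lowerSector {ξ : ℂ} {a : ℝ} (ha : 0 ≤ a) (hξ : -ξ.im ∈ Icc a (π - a)) :
    exp ξ ∈ lowerSector (2 / π * a) := by
  have hsin := Real.two_div_pi_mul_le_sin ha hξ
  rw [Real.sin_neg] at hsin
  simp only [lowerSector, mem_ofPred_eq, norm_exp, exp_im]
  nlinarith [Real.exp_pos ξ.re]

lemma exp_two_pi_mul_add_mem_lowerSector {δ : ℝ} (hδ : 0 < δ) {t : ℂ}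
    (ht : t.im ∈ Ioo (-1 / 2 + δ) (-(2 * δ))) {y : ℝ} (hy : y ∈ Ioo (-(π * δ)) (π * δ)) :
    exp (2 * π * t + y * I) ∈ lowerSector (2 * δ) := by
  have hπ := Real.pi_pos
  have h := exp_mem_lowerSector (ξ := 2 * π * t + y * I) (mul_pos hπ hδ).le (by
    simp only [add_im, mul_im, mul_re, ofReal_re, ofReal_im, re_ofNat, im_ofNat, I_re, I_im]
    constructor <;> nlinarith [ht.1, ht.2, hy.1, hy.2])
  rwa [show 2 / π * (π * δ) = 2 * δ by field_simp] at h

namespace lowerSector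

variable {A : ℝ} {z : ℂ}

lemma ofReal_mul_mem (hz : z ∈ lowerSector A) {s : ℝ} (hs : 0 ≤ s) :
    (s : ℂ) * z ∈ lowerSector A := by
  have : s * (A * ‖z‖) ≤ s * -z.im := mul_le_mul_of_nonneg_left hz hs
  simp only [lowerSector, mem_ofPred_eq, norm_mul, norm_real, Real.norm_of_nonneg hs,
    mul_im, ofReal_re, ofReal_im, zero_mul, add_zero]
  linarith

lemma one_sub_mem_slitPlane (hA : 0 < A) (hz : z ∈ lowerSector A) : 1 - z ∈ slitPlane := by
  rcases eq_or_ne z 0 with rfl | hz0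
  · simp
  · have : 0 < A * ‖z‖ := by positivity
    exact mem_slitPlane_iff.2 (Or.inr (by simp only [sub_im, one_im]; linarith [hz.out]))

lemma half_le_norm_one_sub (hA1 : A ≤ 1) (hz : z ∈ lowerSector A) : A / 2 ≤ ‖1 - z‖ := by
  rcases le_total ‖z‖ (1 / 2) with h | h
  · have := norm_sub_norm_le (1 : ℂ) z
    rw [norm_one] at this
    linarith
  · have h_im : -z.im ≤ ‖1 - z‖ := by
      simpa using (abs_im_le_norm (1 - z)).trans' (le_abs_self _)
    nlinarith [hz.out, norm_nonneg (1 - z)]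

lemma norm_div_le_inv (hA : 0 < A) (hz : z ∈ lowerSector A) {u : ℂ} (hu : |u.im| = |z.im|) :
    ‖z / u‖ ≤ A⁻¹ := by
  rcases eq_or_ne u 0 with rfl | hu0
  · simp [hA.le]
  have hnorm : A * ‖z‖ ≤ ‖u‖ := calc
    A * ‖z‖ ≤ |z.im| := hz.out.trans (neg_le_abs _)
    _ = |u.im| := hu.symm
    _ ≤ ‖u‖ := abs_im_le_norm u
  rw [norm_div, div_le_iff₀ (norm_pos_iff.2 hu0), inv_mul_eq_div, le_div_iff₀ hA, mul_comm]
  exact hnorm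

lemma norm_div_one_sub_ofReal_mul_le (hA1 : A ≤ 1) (hA : 0 < A) (hz : z ∈ lowerSector A)
    {s : ℝ} (hs : 0 ≤ s) : ‖z / (1 - s * z)‖ ≤ 2 * ‖z‖ / A := by
  have hden := half_le_norm_one_sub hA1 (ofReal_mul_mem hz hs)
  rw [norm_div, div_le_div_iff₀ (by linarith) hA]
  nlinarith [norm_nonneg z]

lemma hasDerivAt_log_one_sub_ofReal_mul (hA : 0 < A) (hz : z ∈ lowerSector A) {s : ℝ}
    (hs : 0 ≤ s) :
    HasDerivAt (fun σ : ℝ => log (1 - σ * z)) (-z / (1 - s * z)) s := by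
  have hlin : HasDerivAt (fun σ : ℝ => 1 - (σ : ℂ) * z) (-z) s := by
    simpa using ((hasDerivAt_id (s : ℂ)).mul_const z).const_sub 1 |>.comp_ofReal
  exact hlin.clog_real (one_sub_mem_slitPlane hA (ofReal_mul_mem hz hs))

lemma norm_log_one_sub_ofReal_mul_le (hA1 : A ≤ 1) (hA : 0 < A) (hz : z ∈ lowerSector A)
    {s : ℝ} (hs : 0 ≤ s) : ‖log (1 - s * z)‖ ≤ 2 * ‖z‖ / A * s := by
  have hmvt := norm_image_sub_le_of_norm_deriv_le_segment' (a := 0) (b := s)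
    (f := fun σ : ℝ => log (1 - σ * z)) (f' := fun σ => -z / (1 - σ * z))
    (fun σ hσ => (hasDerivAt_log_one_sub_ofReal_mul hA hz hσ.1).hasDerivWithinAt)
    (fun σ hσ => by
      rw [neg_div, norm_neg]
      exact norm_div_one_sub_ofReal_mul_le hA1 hA hz hσ.1) s ⟨hs, le_rfl⟩
  simpa using hmvt

lemma integral_div_one_sub_ofReal_mul (hA : 0 < A) (hz : z ∈ lowerSector A) :
    ∫ s in (0 : ℝ)..1, z / (1 - s * z) = -log (1 - z) := by
  have hderiv : ∀ s ∈ uIcc (0 : ℝ) 1,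
      HasDerivAt (fun σ : ℝ => -log (1 - σ * z)) (z / (1 - s * z)) s := fun s hs => by
    rw [uIcc_of_le zero_le_one] at hs
    have h := (hasDerivAt_log_one_sub_ofReal_mul hA hz hs.1).neg
    rwa [neg_div, neg_neg] at h
  have hcont : ContinuousOn (fun s : ℝ => z / (1 - s * z)) (uIcc 0 1) := by
    refine continuousOn_const.div (by fun_prop) fun s hs => ?_
    rw [uIcc_of_le zero_le_one] at hs
    exact slitPlane_ne_zero (one_sub_mem_slitPlane hA (ofReal_mul_mem hz hs.1))
  rw [intervalIntegral.integral_eq_sub_of_hasDerivAt hderiv hcont.intervalIntegrable]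
  simp

end lowerSector

lemma hasDerivAt_exp_add_ofReal_mul_I (c : ℂ) (y : ℝ) :
    HasDerivAt (fun x : ℝ => exp (c + x * I)) (I * exp (c + y * I)) y := by
  have h := (((hasDerivAt_id (y : ℂ)).mul_const I).const_add c).cexp.comp_ofReal
  simpa [mul_comm] using h

lemma norm_exp_add_ofReal_mul_I (c : ℂ) (y : ℝ) : ‖exp (c + y * I)‖ = Real.exp c.re := by
  simp [norm_exp]

section ExpArc

variable {c : ℂ} {A U : ℝ}

lemma hasDerivAt_log_one_sub_ofReal_mul_exp_add_ofReal_mul_I (hA : 0 < A) {s y : ℝ}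
    (hs : 0 ≤ s) (hy : exp (c + y * I) ∈ lowerSector A) :
    HasDerivAt (fun x : ℝ => log (1 - s * exp (c + x * I)))
      (-(s * (I * exp (c + y * I))) / (1 - s * exp (c + y * I))) y :=
  (((hasDerivAt_exp_add_ofReal_mul_I c y).const_mul (s : ℂ)).const_sub 1).clog_real
    (lowerSector.one_sub_mem_slitPlane hA (lowerSector.ofReal_mul_mem hy hs))

lemma hasDerivAt_log_one_sub_exp_add_ofReal_mul_I (hA : 0 < A) {y : ℝ}
    (hy : exp (c + y * I) ∈ lowerSector A) :
    HasDerivAt (fun x : ℝ => log (1 - exp (c + x * I)))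
      (-(I * exp (c + y * I)) / (1 - exp (c + y * I))) y := by
  simpa using hasDerivAt_log_one_sub_ofReal_mul_exp_add_ofReal_mul_I hA zero_le_one hy

lemma hasDerivAt_Li2_exp_add_ofReal_mul_I (hA1 : A ≤ 1) (hA : 0 < A) {x : ℝ}
    (hx : ∀ᶠ y : ℝ in 𝓝 x, exp (c + y * I) ∈ lowerSector A) :
    HasDerivAt (fun y : ℝ => Li2 (exp (c + y * I))) (-(I * log (1 - exp (c + x * I)))) x := by
  set w : ℝ → ℂ := fun y => exp (c + y * I) with hw
  set F : ℝ → ℝ → ℂ := fun y s => log (1 - s * w y) / s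
  set F' : ℝ → ℝ → ℂ := fun y s => -(I * (w y / (1 - s * w y)))
  set M : ℝ := 2 * Real.exp c.re / A
  have hF_meas : ∀ y, AEStronglyMeasurable (F y) (volume.restrict (uIoc (0 : ℝ) 1)) :=
    fun y => by fun_prop
  have hF_int : IntervalIntegrable (F x) volume 0 1 := by
    refine (intervalIntegrable_const (c := M)).mono_fun (hF_meas x) ?_
    rw [uIoc_of_le zero_le_one]
    refine (ae_restrict_mem measurableSet_Ioc).mono fun s hs => ?_
    have hlog := lowerSector.norm_log_one_sub_ofReal_mul_le hA1 hA hx.self_of_nhds hs.1.le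
    rw [norm_exp_add_ofReal_mul_I] at hlog
    simp only [F, norm_div, norm_real, Real.norm_of_nonneg hs.1.le, Real.norm_of_nonneg
      (by positivity : 0 ≤ M)]
    rwa [div_le_iff₀ hs.1]
  have hF'_meas : AEStronglyMeasurable (F' x) (volume.restrict (uIoc (0 : ℝ) 1)) := by
    fun_prop
  have h_bound : ∀ s ∈ uIoc (0 : ℝ) 1, ∀ y ∈ {y | w y ∈ lowerSector A}, ‖F' y s‖ ≤ M := by
    intro s hs y hy
    rw [uIoc_of_le zero_le_one] at hs
    have := lowerSector.norm_div_one_sub_ofReal_mul_le hA1 hA hy hs.1.le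
    simpa [F', M, hw, norm_exp_add_ofReal_mul_I] using this
  have h_diff : ∀ s ∈ uIoc (0 : ℝ) 1, ∀ y ∈ {y | w y ∈ lowerSector A},
      HasDerivAt (fun y => F y s) (F' y s) y := by
    intro s hs y hy
    rw [uIoc_of_le zero_le_one] at hs
    refine ((hasDerivAt_log_one_sub_ofReal_mul_exp_add_ofReal_mul_I hA hs.1.le hy).div_const
      (s : ℂ)).congr_deriv ?_
    have : (s : ℂ) ≠ 0 := ofReal_ne_zero.2 hs.1.ne'
    simp only [F', hw]
    field_simp
  obtain ⟨-, hderiv⟩ := intervalIntegral.hasDerivAt_integral_of_dominated_loc_of_deriv_le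
    (bound := fun _ => M) hx (.of_forall hF_meas) hF_int hF'_meas (.of_forall h_bound)
    intervalIntegrable_const (.of_forall h_diff)
  have hinner : ∫ s in (0 : ℝ)..1, F' x s = I * log (1 - w x) := by
    rw [intervalIntegral.integral_neg, intervalIntegral.integral_const_mul,
      lowerSector.integral_div_one_sub_ofReal_mul hA hx.self_of_nhds]
    ring
  rw [hinner] at hderiv
  exact hderiv.neg

lemma Li2_exp_sub_Li2_exp_add_ofReal_mul_I (hA1 : A ≤ 1) (hA : 0 < A) (hU : 0 ≤ U)
    (hsec : ∀ x ∈ Icc 0 U, ∀ᶠ y : ℝ in 𝓝 x, exp (c + y * I) ∈ lowerSector A) :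
    Li2 (exp c) - Li2 (exp (c + U * I)) = I * ∫ u in (0 : ℝ)..U, log (1 - exp (c + u * I)) := by
  have hcont : ContinuousOn (fun u : ℝ => log (1 - exp (c + u * I))) (Icc 0 U) := fun u hu =>
    (hasDerivAt_log_one_sub_exp_add_ofReal_mul_I hA (hsec u hu).self_of_nhds).continuousAt
      |>.continuousWithinAt
  have hFTC := intervalIntegral.integral_eq_sub_of_hasDerivAt
    (fun u hu => hasDerivAt_Li2_exp_add_ofReal_mul_I hA1 hA (hsec u (by rwa [uIcc_of_le hU] at hu)))
    ((continuousOn_const.mul hcont).neg.intervalIntegrable_of_Icc hU)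
  rw [intervalIntegral.integral_neg, intervalIntegral.integral_const_mul] at hFTC
  simp only [ofReal_zero, zero_mul, add_zero] at hFTC
  linear_combination hFTC

lemma norm_log_one_sub_exp_add_ofReal_mul_I_sub_le (hA : 0 < A)
    (hsec : ∀ x ∈ Icc 0 U, exp (c + x * I) ∈ lowerSector A) {u : ℝ} (hu : u ∈ Icc 0 U) :
    ‖log (1 - exp (c + u * I)) - log (1 - exp c)‖ ≤ u / A := by
  have hsub : Icc 0 u ⊆ Icc 0 U := Icc_subset_Icc le_rfl hu.2
  have hmvt := norm_image_sub_le_of_norm_deriv_le_segment' (C := A⁻¹)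
    (fun x hx => (hasDerivAt_log_one_sub_exp_add_ofReal_mul_I hA
      (hsec x (hsub hx))).hasDerivWithinAt)
    (fun x hx => by
      rw [neg_div, norm_neg, mul_div_assoc, norm_mul, norm_I, one_mul]
      exact lowerSector.norm_div_le_inv hA (hsec x (hsub (Ico_subset_Icc_self hx)))
        (by simp)) u ⟨hu.1, le_rfl⟩
  simpa [div_eq_inv_mul] using hmvt

lemma norm_Li2_exp_difference_quotient_le (hA1 : A ≤ 1) (hA : 0 < A) (hU : 0 < U)
    (hsec : ∀ x ∈ Icc 0 U, ∀ᶠ y : ℝ in 𝓝 x, exp (c + y * I) ∈ lowerSector A) :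
    ‖I * (Li2 (exp c) - Li2 (exp (c + U * I))) / (2 * U) + log (1 - exp c) / 2‖
      ≤ U / (2 * A) := by
  have hcont : ContinuousOn (fun u : ℝ => log (1 - exp (c + u * I))) (uIcc 0 U) := fun u hu =>
    (hasDerivAt_log_one_sub_exp_add_ofReal_mul_I hA
      (hsec u (by rwa [uIcc_of_le hU.le] at hu)).self_of_nhds).continuousAt.continuousWithinAt
  have hmean : I * (Li2 (exp c) - Li2 (exp (c + U * I))) / (2 * U) + log (1 - exp c) / 2
      = (2 * U : ℂ)⁻¹ * ∫ u in (0 : ℝ)..U, (log (1 - exp c) - log (1 - exp (c + u * I))) := by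
    rw [Li2_exp_sub_Li2_exp_add_ofReal_mul_I hA1 hA hU.le hsec,
      intervalIntegral.integral_sub intervalIntegrable_const hcont.intervalIntegrable,
      intervalIntegral.integral_const, real_smul, sub_zero]
    have : (U : ℂ) ≠ 0 := ofReal_ne_zero.2 hU.ne'
    field_simp
    ring_nf
    rw [I_sq]
    ring
  have hpointwise : ∀ u ∈ uIoc 0 U,
      ‖log (1 - exp c) - log (1 - exp (c + u * I))‖ ≤ U / A := fun u hu => by
    rw [uIoc_of_le hU.le] at hu
    rw [norm_sub_rev]
    exact (norm_log_one_sub_exp_add_ofReal_mul_I_sub_le hA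
      (fun x hx => (hsec x hx).self_of_nhds) (Ioc_subset_Icc_self hu)).trans
      (div_le_div_of_nonneg_right hu.2 hA.le)
  rw [hmean, norm_mul, norm_inv, show (2 * U : ℂ) = ((2 * U : ℝ) : ℂ) by push_cast; ring,
    norm_real, Real.norm_of_nonneg (by positivity)]
  calc (2 * U)⁻¹ * ‖∫ u in (0 : ℝ)..U, (log (1 - exp c) - log (1 - exp (c + u * I)))‖
      ≤ (2 * U)⁻¹ * (U / A * |U - 0|) := by
        gcongr
        exact intervalIntegral.norm_integral_le_of_norm_le_const hpointwise
    _ = U / (2 * A) := by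
        rw [sub_zero, abs_of_pos hU]
        field_simp

end ExpArc

lemma norm_Efun_bracket_le {A : ℝ} (hA : 0 < A) {w z : ℂ} (hw : w ∈ lowerSector A)
    (hz : z ∈ lowerSector A) {e : ℝ} (he : 0 ≤ e) :
    ‖w / (w - 1) - e / (e + 1) - z / (e + z) + 2‖ ≤ 3 + 2 * A⁻¹ := by
  have hw' := lowerSector.norm_div_le_inv (u := w - 1) hA hw (by simp)
  have he' : ‖(e : ℂ) / (e + 1)‖ ≤ 1 := by
    rw [← ofReal_one, ← ofReal_add, ← ofReal_div, norm_real, Real.norm_of_nonneg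
      (by positivity), div_le_one (by positivity)]
    linarith
  have hz' := lowerSector.norm_div_le_inv (u := e + z) hA hz (by simp)
  calc _ ≤ ‖w / (w - 1)‖ + ‖(e : ℂ) / (e + 1)‖ + ‖z / (e + z)‖ + ‖(2 : ℂ)‖ :=
        norm_add_le_of_le (norm_sub_le_of_le (norm_sub_le _ _) le_rfl) le_rfl
    _ ≤ A⁻¹ + 1 + A⁻¹ + 2 := by gcongr; simp
    _ = 3 + 2 * A⁻¹ := by ring

lemma norm_Efun_le (ζ : ℝ) {δ : ℝ} (hδ : δ ∈ Ioo 0 (1 / 8)) {t : ℂ}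
    (ht : t.im ∈ Ioo (-1 / 2 + δ) (-(2 * δ))) {τ : ℝ} (hτ : τ ∈ Ioo 0 δ) :
    ‖Efun ζ τ t‖ ≤ (π / (4 * δ) + π * (3 + δ⁻¹) / 12) * τ := by
  obtain ⟨hδ0, hδ8⟩ := hδ
  have hπ := Real.pi_pos
  set c : ℂ := 2 * π * t
  set U : ℝ := π * τ
  set w : ℂ := exp (c + U * I)
  set e : ℝ := Real.exp (2 * π * ζ)
  have hsec : ∀ y ∈ Ioo (-(π * δ)) (π * δ), exp (c + y * I) ∈ lowerSector (2 * δ) :=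
    fun y hy => exp_two_pi_mul_add_mem_lowerSector hδ0 ht hy
  have hU : 0 < U := mul_pos hπ hτ.1
  have hUδ : U < π * δ := mul_lt_mul_of_pos_left hτ.2 hπ
  have hc : exp c ∈ lowerSector (2 * δ) := by
    simpa using hsec 0 ⟨by nlinarith, by positivity⟩
  have hw : w ∈ lowerSector (2 * δ) := hsec U ⟨by linarith, hUδ⟩
  have hE : Efun ζ τ t = (I * (Li2 (exp c) - Li2 w) / (2 * U) + log (1 - exp c) / 2)
      + I * U / 12 * (w / (w - 1) - e / (e + 1) - exp c / (e + exp c) + 2) := by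
    have hw' : exp (I * π * τ + 2 * π * t) = w := by congr 1; push_cast [U, c]; ring
    have hw'' : exp (2 * π * t + I * π * τ) = w := by congr 1; push_cast [U, c]; ring
    rw [Efun, hw', hw'', ofReal_exp]
    push_cast [U, c]
    ring
  have hquot := norm_Li2_exp_difference_quotient_le (c := c) (A := 2 * δ) (by linarith)
    (by positivity) hU fun x hx =>
      eventually_of_mem (Ioo_mem_nhds (by nlinarith [hx.1]) (by linarith [hx.2])) hsec
  have hbracket := norm_Efun_bracket_le (by positivity) hw hc (Real.exp_pos _).le (e := e)
  have hfactor : ‖I * U / 12‖ = π * τ / 12 := by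
    simp [U, abs_of_pos hπ, abs_of_pos hτ.1]
  calc ‖Efun ζ τ t‖ ≤ U / (2 * (2 * δ)) + π * τ / 12 * (3 + 2 * (2 * δ)⁻¹) := by
        rw [hE]
        refine norm_add_le_of_le hquot ?_
        rw [norm_mul, hfactor]
        gcongr
    _ = (π / (4 * δ) + π * (3 + δ⁻¹) / 12) * τ := by
        field_simp
        ring

/-- the error term `E(b², t)` is `O(b²)` uniformly in the strip. -/
theorem Efun_bound (ζ δ : ℝ) (hδ : δ ∈ Set.Ioo (0:ℝ) (1/8)) :
    ∃ C > (0:ℝ), ∃ b₀ ∈ Set.Ioo (0:ℝ) 1, ∀ b ∈ Set.Ioo (0:ℝ) b₀, ∀ t : ℂ,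
      t.im ∈ Set.Ioo (-1/2 + δ) (-(2*δ)) → ‖Efun ζ (b^2) t‖ ≤ C * b^2 := by
  have hδ0 := hδ.1
  refine ⟨π / (4 * δ) + π * (3 + δ⁻¹) / 12, by positivity, δ, ⟨hδ0, by linarith [hδ.2]⟩,
    fun b hb t ht => norm_Efun_le ζ hδ ht ⟨pow_pos hb.1 2, ?_⟩⟩
  nlinarith [hb.1, hb.2, hδ.2]
end

section
/- Let ζ ∈ ℝ and ω ∈ ℂ with 0 < Im ω < 1/2, and set t₀ := (1/(2π))·Log(e^{πζ} cosh(πω)/sinh(π(ζ+ω))) (principal logarithm). Then −1/2 < Im t₀ < 0 and t₀ satisfies Log(1 + e^{2π(t₀−ζ)}) − Log(1 − e^{2πt₀}) = 2πω − iπ; moreover, t₀ is the unique t ∈ ℂ with −1/2 < Im t < 0 satisfying Log(1 + e^{2π(t−ζ)}) − Log(1 − e^{2πt}) = 2πω − iπ. -/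
open MeasureTheory

/-!
Write `u = exp (2πt)`. The strip `-1/2 < Im t < 0` is mapped onto the lower half-plane, on which
`t = Log u / (2π)`, and the saddle-point equation only involves `u`. With `a = πζ`, `b = πω`, the
point `W = e^a cosh b / sinh (a + b)` lies in the lower half-plane and satisfies
`1 + e^{-2a} W = e^b C` and `1 - W = -e^{-b} C` for `C = cosh a / sinh (a + b)`, which also lies in the
lower half-plane; this controls the branches of both logarithms and gives the value `2b - iπ`.
Exponentiating the equation turns it into `(1 + e^{-2a} u) / (1 - u) = -e^{2b}`, a Möbius equation
with the single solution `u = W`.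
-/

open Complex
open scoped Real

namespace Complex

lemma sinh_eq_re_add_im (z : ℂ) :
    sinh z = ↑(Real.sinh z.re * Real.cos z.im) + ↑(Real.cosh z.re * Real.sin z.im) * I := by
  conv_lhs => rw [← re_add_im z]
  push_cast
  rw [sinh_add, sinh_mul_I, cosh_mul_I]
  ring

lemma cosh_eq_re_add_im (z : ℂ) :
    cosh z = ↑(Real.cosh z.re * Real.cos z.im) + ↑(Real.sinh z.re * Real.sin z.im) * I := by
  conv_lhs => rw [← re_add_im z]
  push_cast
  rw [cosh_add, sinh_mul_I, cosh_mul_I]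
  ring

lemma sinh_re (z : ℂ) : (sinh z).re = Real.sinh z.re * Real.cos z.im := by
  rw [sinh_eq_re_add_im, add_re, mul_I_re, ofReal_re, ofReal_im, neg_zero, add_zero]

lemma sinh_im (z : ℂ) : (sinh z).im = Real.cosh z.re * Real.sin z.im := by
  rw [sinh_eq_re_add_im, add_im, mul_I_im, ofReal_re, ofReal_im, zero_add]

lemma cosh_re (z : ℂ) : (cosh z).re = Real.cosh z.re * Real.cos z.im := by
  rw [cosh_eq_re_add_im, add_re, mul_I_re, ofReal_re, ofReal_im, neg_zero, add_zero]

lemma cosh_im (z : ℂ) : (cosh z).im = Real.sinh z.re * Real.sin z.im := by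
  rw [cosh_eq_re_add_im, add_im, mul_I_im, ofReal_re, ofReal_im, zero_add]

end Complex

lemma im_exp_neg {x : ℂ} (h₁ : -π < x.im) (h₂ : x.im < 0) : (exp x).im < 0 := by
  rw [exp_im]
  exact mul_neg_of_pos_of_neg (Real.exp_pos _) (Real.sin_neg_of_neg_of_neg_pi_lt h₂ h₁)

lemma eq_of_log_one_add_mul_sub_log_one_sub_eq {c : ℝ} (hc : 0 ≤ c) {u v : ℂ}
    (hu : u.im < 0) (hv : v.im < 0)
    (h : log (1 + c * u) - log (1 - u) = log (1 + c * v) - log (1 - v)) : u = v := by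
  have hadd : ∀ {z : ℂ}, z.im < 0 → 1 + c * z ≠ 0 := fun hz h0 => by
    obtain rfl : c = 0 := by simpa [hz.ne] using congrArg im h0
    simp at h0
  have hsub : ∀ {z : ℂ}, z.im < 0 → 1 - z ≠ 0 := fun hz h0 => by
    have := congrArg im h0
    simp only [sub_im, one_im, zero_im, zero_sub, neg_eq_zero] at this
    linarith
  have hratio := congrArg exp h
  rw [exp_sub, exp_sub, exp_log (hadd hu), exp_log (hsub hu), exp_log (hadd hv),
    exp_log (hsub hv), div_eq_div_iff (hsub hu) (hsub hv)] at hratio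
  have hc1 : (1 + c : ℂ) ≠ 0 := by exact_mod_cast (by linarith : (1 + c : ℝ) ≠ 0)
  have : (1 + c : ℂ) * (u - v) = 0 := by linear_combination hratio
  simpa [hc1, sub_eq_zero] using this

lemma sinh_add_add_exp_neg_mul_cosh (a b : ℂ) :
    sinh (a + b) + exp (-a) * cosh b = exp b * cosh a := by
  simp only [sinh, cosh, neg_add, exp_add, exp_neg]
  field_simp
  ring

lemma sinh_add_sub_exp_mul_cosh (a b : ℂ) :
    sinh (a + b) - exp a * cosh b = -(exp (-b) * cosh a) := by
  simp only [sinh, cosh, neg_add, exp_add, exp_neg]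
  field_simp
  ring

section Saddle

variable (a : ℝ) {b : ℂ}

lemma im_sinh_ofReal_add_pos (hb₀ : 0 < b.im) (hb₁ : b.im < π) : 0 < (sinh (a + b)).im := by
  rw [sinh_im, add_im, ofReal_im, zero_add]
  exact mul_pos (Real.cosh_pos _) (Real.sin_pos_of_pos_of_lt_pi hb₀ hb₁)

lemma im_cosh_ofReal_div_sinh_neg (hb₀ : 0 < b.im) (hb₁ : b.im < π) :
    (cosh a / sinh (a + b)).im < 0 := by
  have hS := im_sinh_ofReal_add_pos a hb₀ hb₁
  rw [← ofReal_cosh, div_im, ofReal_im, ofReal_re, zero_mul, zero_div, zero_sub, neg_lt_zero]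
  exact div_pos (mul_pos (Real.cosh_pos a) hS) (normSq_pos.2 fun h => by simp [h] at hS)

lemma im_exp_mul_cosh_div_sinh_neg (hb₀ : 0 < b.im) (hb₁ : b.im < π / 2) :
    (exp a * cosh b / sinh (a + b)).im < 0 := by
  have hS := im_sinh_ofReal_add_pos a hb₀ (by linarith)
  have hnum : (cosh b).im * (sinh (a + b)).re - (cosh b).re * (sinh (a + b)).im
      = -(Real.cosh a * Real.sin b.im * Real.cos b.im) := by
    have hcosh : Real.cosh (a + b.re) * Real.cosh b.re - Real.sinh (a + b.re) * Real.sinh b.re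
        = Real.cosh a := by rw [← Real.cosh_sub, add_sub_cancel_right]
    simp only [cosh_re, cosh_im, sinh_re, sinh_im, add_re, add_im, ofReal_re, ofReal_im, zero_add]
    linear_combination (-(Real.sin b.im * Real.cos b.im)) * hcosh
  have hpos : 0 < Real.cosh a * Real.sin b.im * Real.cos b.im :=
    mul_pos (mul_pos (Real.cosh_pos a) (Real.sin_pos_of_pos_of_lt_pi hb₀ (by linarith)))
      (Real.cos_pos_of_mem_Ioo ⟨by linarith, hb₁⟩)
  rw [mul_div_assoc, ← ofReal_exp, im_ofReal_mul, div_im, div_sub_div_same, hnum]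
  exact mul_neg_of_pos_of_neg (Real.exp_pos a)
    (div_neg_of_neg_of_pos (by linarith) (normSq_pos.2 fun h => by simp [h] at hS))

lemma log_one_add_exp_mul_sub_log_one_sub (hb₀ : 0 < b.im) (hb₁ : b.im < π) :
    log (1 + Real.exp (-2 * a) * (exp a * cosh b / sinh (a + b)))
      - log (1 - exp a * cosh b / sinh (a + b)) = 2 * b - π * I := by
  have hCim := im_cosh_ofReal_div_sinh_neg a hb₀ hb₁
  set C := cosh a / sinh (a + b) with hC
  have hS : sinh (a + b) ≠ 0 := fun h => by
    simpa [h] using im_sinh_ofReal_add_pos a hb₀ hb₁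
  have hC0 : C ≠ 0 := fun h => by simp [h] at hCim
  have hargC : C.arg < 0 := arg_neg_iff.2 hCim
  have hargC' := neg_pi_lt_arg C
  have hplus : 1 + Real.exp (-2 * a) * (exp a * cosh b / sinh (a + b)) = exp (b + log C) := by
    rw [exp_add, exp_log hC0, hC, ofReal_exp]
    field_simp
    rw [← exp_add, show ((-(2 * a) : ℝ) : ℂ) + a = -a by push_cast; ring]
    exact sinh_add_add_exp_neg_mul_cosh _ _
  have hminus : 1 - exp a * cosh b / sinh (a + b) = exp (-b + log C + π * I) := by
    rw [exp_add, exp_add, exp_log hC0, exp_pi_mul_I, hC]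
    field_simp
    exact sinh_add_sub_exp_mul_cosh _ _
  rw [hplus, hminus, log_exp, log_exp]
  · ring
  all_goals simp only [add_im, neg_im, log_im, mul_I_im, ofReal_re]
  all_goals linarith

end Saddle

/-- the unique saddle point of the phase function of `𝓜`
in the strip `-1/2 < Im t < 0`. -/
theorem M_saddle_point (ζ : ℝ) (ω : ℂ) (hω1 : 0 < ω.im) (hω2 : ω.im < 1/2)
    (t₀ : ℂ)
    (ht₀ : t₀ = (1/(2*(Real.pi:ℂ))) *
      Complex.log (Complex.exp ((Real.pi:ℂ)*(ζ:ℂ)) * Complex.cosh ((Real.pi:ℂ)*ω)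
        / Complex.sinh ((Real.pi:ℂ)*((ζ:ℂ)+ω)))) :
    (-1/2 < t₀.im ∧ t₀.im < 0) ∧
    (Complex.log (1 + Complex.exp (2*(Real.pi:ℂ)*(t₀-(ζ:ℂ))))
      - Complex.log (1 - Complex.exp (2*(Real.pi:ℂ)*t₀))
      = 2*(Real.pi:ℂ)*ω - Complex.I*(Real.pi:ℂ)) ∧
    (∀ t : ℂ, -1/2 < t.im → t.im < 0 →
      Complex.log (1 + Complex.exp (2*(Real.pi:ℂ)*(t-(ζ:ℂ))))
        - Complex.log (1 - Complex.exp (2*(Real.pi:ℂ)*t))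
        = 2*(Real.pi:ℂ)*ω - Complex.I*(Real.pi:ℂ) → t = t₀) := by
  have hb₀ : 0 < ((π : ℂ) * ω).im := by simpa using mul_pos Real.pi_pos hω1
  have hb₁ : ((π : ℂ) * ω).im < π / 2 := by simp; nlinarith [Real.pi_pos]
  set W := exp (π * ζ) * cosh (π * ω) / sinh (π * (ζ + ω)) with hW
  have hW' : W = exp ↑(π * ζ) * cosh (π * ω) / sinh (↑(π * ζ) + π * ω) := by
    rw [hW, mul_add]; push_cast; rfl
  have hWim : W.im < 0 := hW' ▸ im_exp_mul_cosh_div_sinh_neg _ hb₀ hb₁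
  have hsaddle := log_one_add_exp_mul_sub_log_one_sub (π * ζ) hb₀ (by linarith)
  rw [← hW', show 2 * (π * ω) - π * I = 2 * (π : ℂ) * ω - I * π by ring] at hsaddle
  have h2π : (2 * π : ℂ) ≠ 0 := by exact_mod_cast Real.two_pi_pos.ne'
  have hlog : 2 * π * t₀ = log W := by rw [ht₀]; field_simp
  have hexp : exp (2 * π * t₀) = W := by
    rw [hlog, exp_log fun h => by simp [h] at hWim]
  have hshift (t : ℂ) : exp (2 * π * (t - ζ)) = Real.exp (-2 * (π * ζ)) * exp (2 * π * t) := by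
    rw [ofReal_exp, ← exp_add]; push_cast; ring_nf
  have harg : (2 * π * t₀).im = W.arg := by rw [hlog, log_im]
  have him (t : ℂ) : (2 * π * t).im = 2 * π * t.im := by simp
  refine ⟨⟨?_, ?_⟩, by rwa [hshift, hexp], fun t ht₁ ht₂ ht => ?_⟩
  · have := neg_pi_lt_arg W
    rw [← harg, him] at this
    nlinarith [Real.pi_pos]
  · have := arg_neg_iff.2 hWim
    rw [← harg, him] at this
    nlinarith [Real.pi_pos]
  · have hstrip : -π < (2 * π * t).im ∧ (2 * π * t).im < 0 := by
      rw [him]; constructor <;> nlinarith [Real.pi_pos]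
    have hu : exp (2 * π * t) = W :=
      eq_of_log_one_add_mul_sub_log_one_sub_eq (Real.exp_pos _).le
        (im_exp_neg hstrip.1 hstrip.2) hWim (by rw [← hshift, ht, hsaddle])
    apply mul_left_cancel₀ h2π
    rw [← log_exp hstrip.1 (by linarith [Real.pi_pos, hstrip.2]), hu, hlog]
end

section
/- Let σ, μ ∈ ℝ satisfy e^{2πμ} > sinh²(2πσ), and set t₀ := (1/(2π))·Log(−cosh(2πσ) − i√(e^{2πμ} − sinh²(2πσ))) (principal logarithm, positive real square root). Then −1/2 < Im t₀ < −1/4 and t₀ satisfies Log(1 + e^{2π(t₀−σ)}) + Log(1 + e^{2π(t₀+σ)}) = 2πμ − πi; moreover, t₀ is the unique t ∈ ℂ with −1/2 < Im t < −1/4 satisfying Log(1 + e^{2π(t−σ)}) + Log(1 + e^{2π(t+σ)}) = 2πμ − πi. -/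
open MeasureTheory

/-!
Put `u = e^{2πt}`, `c = cosh 2πσ`, `S = √(e^{2πμ} - sinh² 2πσ)`. Exponentiating the saddle
equation gives `(1 + u e^{-2πσ})(1 + u e^{2πσ}) = -e^{2πμ}`, i.e. `u² + 2cu + 1 + e^{2πμ} = 0`,
whose roots are `-c ∓ iS`. On the strip `u` lies in the lower half-plane, which selects
`u = -c - iS = e^{2πt₀}`. Conversely both factors `1 + u e^{∓2πσ}` then have arguments in
`(-π, 0)`, so the sum of their logarithms carries no `2πi` correction; and `t ↦ e^{2πt}` is
injective on the strip.
-/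

namespace Complex

open scoped Real

lemma exp_im_neg {x : ℂ} (h₁ : -π < x.im) (h₂ : x.im < 0) : (exp x).im < 0 := by
  rw [exp_im]
  exact mul_neg_of_pos_of_neg (Real.exp_pos _) (Real.sin_neg_of_neg_of_neg_pi_lt h₂ h₁)

lemma arg_lt_neg_pi_div_two {z : ℂ} (hre : z.re < 0) (him : z.im < 0) : arg z < -(π / 2) := by
  refine lt_of_le_of_ne ?_ fun h => hre.ne (arg_eq_neg_pi_div_two_iff.mp h).1
  exact not_lt.mp fun h => by rcases neg_pi_div_two_lt_arg_iff.mp h with h | h <;> linarith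

/-- The arguments of `a` and `b` lie in `(-π, 0)`, so after a shift by `πi` both sides have
imaginary part in `(-π, π)`, where `exp` is injective. -/
lemma log_add_log_of_im_neg {a b z : ℂ} (ha : a.im < 0) (hb : b.im < 0) (hz : z.im = -π)
    (hab : a * b = exp z) : log a + log b = z := by
  have ha₀ : a ≠ 0 := fun h => by simp [h] at ha
  have hb₀ : b ≠ 0 := fun h => by simp [h] at hb
  have ha_arg : arg a < 0 := arg_neg_iff.mpr ha
  have hb_arg : arg b < 0 := arg_neg_iff.mpr hb
  have ha_arg' := neg_pi_lt_arg a
  have hb_arg' := neg_pi_lt_arg b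
  have hshift : log a + log b + π * I = z + π * I := by
    refine exp_inj_of_neg_pi_lt_of_le_pi ?_ ?_ ?_ ?_ ?_ <;> simp only [add_im, log_im, hz,
      mul_im, ofReal_re, ofReal_im, I_re, I_im] at * <;> try linarith
    rw [exp_add, exp_add, exp_add, exp_log ha₀, exp_log hb₀, hab]
  linear_combination hshift

lemma one_add_exp_sub_mul_one_add_exp_add (x a : ℂ) :
    (1 + exp (x - a)) * (1 + exp (x + a)) = exp x ^ 2 + 2 * cosh a * exp x + 1 := by
  rw [exp_sub, exp_add, two_cosh, exp_neg]
  field_simp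
  ring

lemma sq_add_two_mul_add_one_eq_neg_iff {c E S : ℝ} (hS : 0 < S) (hS₂ : S ^ 2 = E + 1 - c ^ 2)
    {u : ℂ} (hu : u.im < 0) : u ^ 2 + 2 * c * u + 1 = -E ↔ u = -c - I * S := by
  have hS₂' : (S : ℂ) ^ 2 = E + 1 - c ^ 2 := by exact_mod_cast hS₂
  have hfactor : u ^ 2 + 2 * c * u + 1 + E = (u - (-c - I * S)) * (u - (-c + I * S)) := by
    linear_combination (-1 : ℂ) * hS₂' + S ^ 2 * I_sq
  constructor
  · intro h
    rcases mul_eq_zero.mp (hfactor ▸ (by linear_combination h : u ^ 2 + 2 * c * u + 1 + E = 0))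
      with h | h
    · exact sub_eq_zero.mp h
    · have him : u.im = S := by simp [sub_eq_zero.mp h]
      linarith
  · rintro rfl
    linear_combination hfactor

end Complex

open Complex in
open scoped Real in
lemma log_one_add_exp_add_log_one_add_exp_eq_iff {σ μ : ℝ} {t : ℂ} (h₁ : -1 / 2 < t.im)
    (h₂ : t.im < 0) :
    log (1 + exp (2 * π * (t - σ))) + log (1 + exp (2 * π * (t + σ))) = 2 * π * μ - π * I ↔
      exp (2 * π * t) ^ 2 + 2 * (Real.cosh (2 * π * σ) : ℂ) * exp (2 * π * t) + 1 =
        -(Real.exp (2 * π * μ) : ℂ) := by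
  have hprod : (1 + exp (2 * π * (t - σ))) * (1 + exp (2 * π * (t + σ))) =
      exp (2 * π * t) ^ 2 + 2 * (Real.cosh (2 * π * σ) : ℂ) * exp (2 * π * t) + 1 := by
    rw [mul_sub (2 * (π : ℂ)), mul_add (2 * (π : ℂ)), one_add_exp_sub_mul_one_add_exp_add]
    push_cast
    ring
  have hrhs : exp (2 * π * μ - π * I) = -(Real.exp (2 * π * μ) : ℂ) := by
    rw [exp_sub, exp_pi_mul_I, ofReal_exp]
    push_cast
    ring
  have him_neg : ∀ x : ℝ, (1 + exp (2 * π * (t + x))).im < 0 := fun x => by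
    rw [add_im, one_im, zero_add]
    apply exp_im_neg <;> simp <;> nlinarith [Real.pi_pos]
  have hA := him_neg (-σ)
  have hB := him_neg σ
  rw [ofReal_neg, ← sub_eq_add_neg] at hA
  constructor
  · intro h
    have h' := congrArg exp h
    rwa [exp_add, exp_log (ne_of_apply_ne im (by simpa using hA.ne)),
      exp_log (ne_of_apply_ne im (by simpa using hB.ne)), hprod, hrhs] at h'
  · intro h
    exact log_add_log_of_im_neg hA hB (by simp) (by rw [hprod, h, hrhs])

/-- the unique saddle point of the phase function of `𝓠`
in the strip `-1/2 < Im t < -1/4`. -/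
theorem Q_saddle_point (σ μ : ℝ)
    (h : Real.sinh (2*Real.pi*σ)^2 < Real.exp (2*Real.pi*μ))
    (t₀ : ℂ)
    (ht₀ : t₀ = (1/(2*(Real.pi:ℂ))) *
      Complex.log (-(Real.cosh (2*Real.pi*σ) : ℂ) - Complex.I *
        (Real.sqrt (Real.exp (2*Real.pi*μ) - Real.sinh (2*Real.pi*σ)^2) : ℂ))) :
    (-1/2 < t₀.im ∧ t₀.im < -1/4) ∧
    (Complex.log (1 + Complex.exp (2*(Real.pi:ℂ)*(t₀-(σ:ℂ))))
      + Complex.log (1 + Complex.exp (2*(Real.pi:ℂ)*(t₀+(σ:ℂ))))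
      = 2*(Real.pi:ℂ)*(μ:ℂ) - (Real.pi:ℂ)*Complex.I) ∧
    (∀ t : ℂ, -1/2 < t.im → t.im < -1/4 →
      Complex.log (1 + Complex.exp (2*(Real.pi:ℂ)*(t-(σ:ℂ))))
        + Complex.log (1 + Complex.exp (2*(Real.pi:ℂ)*(t+(σ:ℂ))))
        = 2*(Real.pi:ℂ)*(μ:ℂ) - (Real.pi:ℂ)*Complex.I → t = t₀) := by
  set c := Real.cosh (2 * Real.pi * σ)
  set S := Real.sqrt (Real.exp (2 * Real.pi * μ) - Real.sinh (2 * Real.pi * σ) ^ 2)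
  set w : ℂ := -(c : ℂ) - Complex.I * S
  have hS : 0 < S := Real.sqrt_pos.mpr (sub_pos.mpr h)
  have hw_re : w.re < 0 := by simpa [w] using Real.cosh_pos (2 * Real.pi * σ)
  have hw_im : w.im < 0 := by simpa [w] using hS
  have hπ : (2 * Real.pi : ℂ) ≠ 0 := by exact_mod_cast Real.two_pi_pos.ne'
  have hlog : 2 * Real.pi * t₀ = Complex.log w := by rw [ht₀]; field_simp
  have hexp : Complex.exp (2 * Real.pi * t₀) = w :=
    hlog ▸ Complex.exp_log fun h0 => by simp [h0] at hw_im
  have harg : 2 * Real.pi * t₀.im = w.arg := by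
    simpa [Complex.log_im] using congrArg Complex.im hlog
  have hstrip : -1 / 2 < t₀.im ∧ t₀.im < -1 / 4 := by
    have := Complex.neg_pi_lt_arg w
    have := Complex.arg_lt_neg_pi_div_two hw_re hw_im
    constructor <;> nlinarith [Real.pi_pos]
  have hroot : ∀ u : ℂ, u.im < 0 →
      (u ^ 2 + 2 * c * u + 1 = -(Real.exp (2 * Real.pi * μ) : ℂ) ↔ u = w) := fun u hu =>
    Complex.sq_add_two_mul_add_one_eq_neg_iff hS (by
      rw [Real.sq_sqrt (sub_pos.mpr h).le, ← Real.cosh_sq_sub_sinh_sq (2 * Real.pi * σ)]; ring) hu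
  refine ⟨hstrip, (log_one_add_exp_add_log_one_add_exp_eq_iff hstrip.1 (by linarith)).mpr
    ((hroot _ (hexp ▸ hw_im)).mpr hexp), fun t h₁ h₂ ht => ?_⟩
  have him : (2 * Real.pi * t).im = 2 * Real.pi * t.im := by simp
  have hu : Complex.exp (2 * Real.pi * t) = w :=
    (hroot _ (Complex.exp_im_neg (by rw [him]; nlinarith [Real.pi_pos])
      (by rw [him]; nlinarith [Real.pi_pos]))).mp
      ((log_one_add_exp_add_log_one_add_exp_eq_iff h₁ (by linarith)).mp ht)
  refine mul_left_cancel₀ hπ ?_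
  rw [hlog, ← hu, Complex.log_exp] <;> rw [him] <;> nlinarith [Real.pi_pos]
end

section
/- Let σ ∈ ℝ. Then for every t ∈ ℂ with −1/2 < Im t < −1/4: Re( −2πi·( sinh(2πt)/(cosh(2πσ) + cosh(2πt)) + 1 ) ) < 0. (The displayed quantity is f''(t) for the phase function f of the saddle point analysis of 𝓠.) -/
open MeasureTheory

private lemma coshDecomp (z : ℂ) : Complex.cosh z =
    (Real.cosh z.re * Real.cos z.im : ℝ) + (Real.sinh z.re * Real.sin z.im : ℝ) * Complex.I := by
  have h : Complex.cosh z = Complex.cosh (↑z.re + ↑z.im * Complex.I) := by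
    rw [Complex.re_add_im]
  rw [h, Complex.cosh_add, Complex.cosh_mul_I, Complex.sinh_mul_I]
  push_cast
  rw [← Complex.ofReal_cosh, ← Complex.ofReal_sinh, ← Complex.ofReal_cos, ← Complex.ofReal_sin]
  ring

private lemma sinhDecomp (z : ℂ) : Complex.sinh z =
    (Real.sinh z.re * Real.cos z.im : ℝ) + (Real.cosh z.re * Real.sin z.im : ℝ) * Complex.I := by
  have h : Complex.sinh z = Complex.sinh (↑z.re + ↑z.im * Complex.I) := by
    rw [Complex.re_add_im]
  rw [h, Complex.sinh_add, Complex.cosh_mul_I, Complex.sinh_mul_I]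
  push_cast
  rw [← Complex.ofReal_cosh, ← Complex.ofReal_sinh, ← Complex.ofReal_cos, ← Complex.ofReal_sin]
  ring

/-- `Re f''(t) < 0` in the strip `-1/2 < Im t < -1/4` for the
phase function of `𝓠`. -/
theorem Q_phase_second_derivative_re_neg (σ : ℝ) (t : ℂ)
    (h1 : -1/2 < t.im) (h2 : t.im < -1/4) :
    (-(2*(Real.pi:ℂ)*Complex.I) *
      (Complex.sinh (2*(Real.pi:ℂ)*t)
        / ((Real.cosh (2*Real.pi*σ) : ℂ) + Complex.cosh (2*(Real.pi:ℂ)*t)) + 1)).re < 0 := by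
  have hπ := Real.pi_pos
  set y : ℝ := 2*Real.pi*t.im with hy
  set x : ℝ := 2*Real.pi*t.re with hx
  have hu_im : (2*(Real.pi:ℂ)*t).im = y := by simp [hy]
  have hu_re : (2*(Real.pi:ℂ)*t).re = x := by simp [hx]
  have hy1 : -Real.pi < y := by rw [hy]; nlinarith
  have hy2 : y < -(Real.pi/2) := by rw [hy]; nlinarith
  have hsin : Real.sin y < 0 := by
    have h := Real.sin_pos_of_pos_of_lt_pi (x := -y) (by linarith) (by linarith)
    rw [Real.sin_neg] at h; linarith
  have hcos : -1 < Real.cos y := by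
    have h := Real.cos_lt_cos_of_nonneg_of_le_pi (x := -y) (y := Real.pi)
      (by linarith) le_rfl (by linarith)
    rwa [Real.cos_pi, Real.cos_neg] at h
  have hc : (1:ℝ) ≤ Real.cosh (2*Real.pi*σ) := Real.one_le_cosh _
  have hcx : (1:ℝ) ≤ Real.cosh x := Real.one_le_cosh x
  have hpyth : Real.cosh x ^ 2 = Real.sinh x ^ 2 + 1 := Real.cosh_sq x
  set D : ℂ := (Real.cosh (2*Real.pi*σ) : ℂ) + Complex.cosh (2*(Real.pi:ℂ)*t) with hD
  have hDre : D.re = Real.cosh (2*Real.pi*σ) + Real.cosh x * Real.cos y := by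
    rw [hD, coshDecomp, hu_re, hu_im]; simp [-Complex.ofReal_cosh, Complex.cos_ofReal_re, Complex.sin_ofReal_re, Complex.sinh_ofReal_re]
  have hDim : D.im = Real.sinh x * Real.sin y := by
    rw [hD, coshDecomp, hu_re, hu_im]; simp [-Complex.ofReal_cosh, Complex.cos_ofReal_re, Complex.sin_ofReal_re, Complex.sinh_ofReal_re]
  have hDne : D ≠ 0 := by
    intro h
    have hre : D.re = 0 := by rw [h]; simp
    have him : D.im = 0 := by rw [h]; simp
    rw [hDre] at hre; rw [hDim] at him
    have hsx : Real.sinh x = 0 := by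
      rcases mul_eq_zero.mp him with h' | h'
      · exact h'
      · exact absurd h' (ne_of_lt hsin)
    nlinarith
  have hNS : 0 < Complex.normSq D := Complex.normSq_pos.mpr hDne
  have hSre : (Complex.sinh (2*(Real.pi:ℂ)*t)).re = Real.sinh x * Real.cos y := by
    rw [sinhDecomp, hu_re, hu_im]; simp [Complex.cosh_ofReal_re, Complex.cos_ofReal_re, Complex.sin_ofReal_re, Complex.sinh_ofReal_re]
  have hSim : (Complex.sinh (2*(Real.pi:ℂ)*t)).im = Real.cosh x * Real.sin y := by
    rw [sinhDecomp, hu_re, hu_im]; simp [Complex.cosh_ofReal_re, Complex.cos_ofReal_re, Complex.sin_ofReal_re, Complex.sinh_ofReal_re]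
  have hq : (Complex.sinh (2*(Real.pi:ℂ)*t) / D).im < 0 := by
    rw [Complex.div_im, hSre, hSim, hDre, hDim]
    have hnum : Real.cosh x * Real.sin y * (Real.cosh (2*Real.pi*σ) + Real.cosh x * Real.cos y)
        - Real.sinh x * Real.cos y * (Real.sinh x * Real.sin y)
        = Real.sin y * (Real.cosh (2*Real.pi*σ) * Real.cosh x + Real.cos y) := by
      linear_combination Real.sin y * Real.cos y * hpyth
    have hpos : 0 < Real.cosh (2*Real.pi*σ) * Real.cosh x + Real.cos y := by nlinarith
    have hneg : Real.cosh x * Real.sin y * (Real.cosh (2*Real.pi*σ) + Real.cosh x * Real.cos y)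
        - Real.sinh x * Real.cos y * (Real.sinh x * Real.sin y) < 0 := by
      rw [hnum]; exact mul_neg_of_neg_of_pos hsin hpos
    have := div_neg_of_neg_of_pos hneg hNS
    calc Real.cosh x * Real.sin y * (Real.cosh (2*Real.pi*σ) + Real.cosh x * Real.cos y) /
          Complex.normSq D - Real.sinh x * Real.cos y * (Real.sinh x * Real.sin y) /
          Complex.normSq D
        = (Real.cosh x * Real.sin y * (Real.cosh (2*Real.pi*σ) + Real.cosh x * Real.cos y)
          - Real.sinh x * Real.cos y * (Real.sinh x * Real.sin y)) / Complex.normSq D := by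
          ring
      _ < 0 := this
  have hre : (-(2*(Real.pi:ℂ)*Complex.I) *
      (Complex.sinh (2*(Real.pi:ℂ)*t) / D + 1)).re
      = 2*Real.pi * (Complex.sinh (2*(Real.pi:ℂ)*t) / D).im := by
    simp [Complex.mul_re, Complex.add_re, Complex.add_im]
  rw [hre]
  nlinarith
end

section
/- Let σ, μ ∈ ℝ satisfy e^{2πμ} > sinh²(2πσ), set t₀ := (1/(2π))·Log(−cosh(2πσ) − i√(e^{2πμ} − sinh²(2πσ))), g(t₀) := e^{π(t₀−μ)}, and A := −2πi·( sinh(2πt₀)/(cosh(2πσ) + cosh(2πt₀)) + 1 ). Then e^{3πi/4}·g(t₀)·√(2π)/√(−A) = e^{πi/4}/(√2·(e^{2πμ} − sinh²(2πσ))^{1/4}), where √(−A) is the principal branch square root and (e^{2πμ} − sinh²(2πσ))^{1/4} is the positive real fourth root. -/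
open MeasureTheory

/-!
Write `c = cosh 2πσ`, `E = e^{2πμ}`, `r = √(E - sinh² 2πσ)` and `x = c + i r`, so that
`c² + r² = 1 + E` and `w = e^{2πt₀} = -x` is a root of `w² + 2cw + 1 = -E`. Then the
denominator `c + cosh 2πt₀` collapses and `-A = (4πr/E) x`. Since `x` lies in the upper half
plane, `Log(-x) = Log x - πi`, so `g(t₀) = e^{πt₀ - πμ} = -i x^{1/2} e^{-πμ}`: the square roots
of `x` cancel, `e^{3πi/4} (-i) = e^{πi/4}`, and what remains is the positive real number
`e^{-πμ} √(2π) / √(4πr/E) = 1 / (√2 √r)`.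
-/
open Complex
open scoped Real

theorem Complex.ofReal_mul_cpow {q : ℝ} (hq : 0 < q) {z : ℂ} (hz : z ≠ 0) (w : ℂ) :
    ((q : ℂ) * z) ^ w = (q : ℂ) ^ w * z ^ w := by
  have hq' : (q : ℂ) ≠ 0 := ofReal_ne_zero.2 hq.ne'
  rw [cpow_def_of_ne_zero (mul_ne_zero hq' hz), log_ofReal_mul hq hz, cpow_def_of_ne_zero hq',
    cpow_def_of_ne_zero hz, ← exp_add, add_mul, ofReal_log hq.le]

theorem Complex.log_neg_of_im_pos {x : ℂ} (hx : 0 < x.im) : log (-x) = log x - π * I := by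
  apply Complex.ext <;> simp [log_re, log_im, arg_neg_eq_arg_sub_pi_of_im_pos hx]

theorem Complex.exp_log_neg_div_two_of_im_pos {x : ℂ} (hx : 0 < x.im) :
    exp (log (-x) / 2) = -I * x ^ (1 / 2 : ℂ) := by
  have hx0 : x ≠ 0 := fun h => by simp [h] at hx
  rw [log_neg_of_im_pos hx, cpow_def_of_ne_zero hx0, ← exp_neg_pi_div_two_mul_I, ← exp_add]
  congr 1
  ring

/-- `c + cosh z = (w² + 2cw + 1) / (2w)` for `w = exp z`, and the hypotheses make
`w = -c - I r` a root of `w² + 2cw + 1 = -E`. -/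
theorem Complex.sinh_div_add_cosh_add_one_of_exp_eq {z c r E : ℂ} (hz : exp z = -c - I * r)
    (hcr : c ^ 2 + r ^ 2 = 1 + E) (hE : E ≠ 0) :
    sinh z / (c + cosh z) + 1 = 2 * I * r * exp z / E := by
  have hw : exp z ≠ 0 := exp_ne_zero z
  have hcosh : c + cosh z = -E / (2 * exp z) := by
    rw [cosh, exp_neg, eq_div_iff (mul_ne_zero two_ne_zero hw)]
    field_simp
    linear_combination (exp z + c - I * r) * hz + r ^ 2 * I_sq - hcr
  rw [hcosh, sinh, exp_neg]
  field_simp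
  linear_combination -(exp z - c + I * r) * hz - hcr + r ^ 2 * I_sq

theorem Real.sqrt_sqrt_eq_rpow_quarter {y : ℝ} (hy : 0 ≤ y) : √(√y) = y ^ (1 / 4 : ℝ) := by
  rw [Real.sqrt_eq_rpow, Real.sqrt_eq_rpow, ← Real.rpow_mul hy]
  norm_num

theorem Complex.ofReal_cpow_one_half {q : ℝ} (hq : 0 ≤ q) : (q : ℂ) ^ (1 / 2 : ℂ) = (√q : ℝ) := by
  rw [Real.sqrt_eq_rpow, ofReal_cpow hq]
  push_cast
  rfl

theorem Complex.exp_three_pi_div_four_mul_I_mul_neg_I :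
    exp (3 * π * I / 4) * -I = exp (π * I / 4) := by
  rw [show 3 * π * I / 4 = π * I / 4 + π / 2 * I by ring, exp_add, exp_pi_div_two_mul_I,
    mul_assoc, mul_neg, I_mul_I, neg_neg, mul_one]

theorem Real.exp_neg_mul_sqrt_div_sqrt_eq {μ r : ℝ} (hr : 0 < r) :
    Real.exp (-(π * μ)) * √(2 * π) / √(4 * π * r / Real.exp (2 * π * μ)) = 1 / (√2 * √r) := by
  have hsq : 4 * π * r / Real.exp (2 * π * μ) = (√2 * √r * √(2 * π) / Real.exp (π * μ)) ^ 2 := by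
    rw [div_pow, mul_pow, mul_pow, Real.sq_sqrt zero_le_two, Real.sq_sqrt hr.le,
      Real.sq_sqrt (by positivity), ← Real.exp_nat_mul]
    push_cast
    ring_nf
  rw [hsq, Real.sqrt_sq (by positivity), Real.exp_neg]
  field_simp

theorem exp_mul_amplitude_mul_sqrt_div_sqrt_eq {x : ℂ} (hx : x ≠ 0) {μ r : ℝ} (hr : 0 < r) :
    exp (3 * π * I / 4) * (-I * x ^ (1 / 2 : ℂ) * (Real.exp (-(π * μ)) : ℂ))
        * (2 * (π : ℂ)) ^ (1 / 2 : ℂ)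
        / (((4 * π * r / Real.exp (2 * π * μ) : ℝ) : ℂ) * x) ^ (1 / 2 : ℂ)
      = exp (π * I / 4) / ((√2 : ℝ) * (√r : ℝ)) := by
  have hq : 0 < 4 * π * r / Real.exp (2 * π * μ) := by positivity
  have hx_sqrt : x ^ (1 / 2 : ℂ) ≠ 0 := (cpow_ne_zero_iff_of_exponent_ne_zero (by norm_num)).2 hx
  rw [ofReal_mul_cpow hq hx, ofReal_cpow_one_half hq.le,
    show 2 * (π : ℂ) = ((2 * π : ℝ) : ℂ) by push_cast; ring, ofReal_cpow_one_half (by positivity),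
    ← exp_three_pi_div_four_mul_I_mul_neg_I, ← ofReal_mul, ← one_div_one_div (√2 * √r),
    ← Real.exp_neg_mul_sqrt_div_sqrt_eq (μ := μ) hr]
  push_cast
  field_simp

/-- simplification of the leading coefficient in the
semiclassical asymptotics of `𝓠`. -/
theorem Q_coefficient_simplification (σ μ : ℝ)
    (h : Real.sinh (2*Real.pi*σ)^2 < Real.exp (2*Real.pi*μ))
    (t₀ : ℂ)
    (ht₀ : t₀ = (1/(2*(Real.pi:ℂ))) *
      Complex.log (-(Real.cosh (2*Real.pi*σ) : ℂ) - Complex.I *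
        (Real.sqrt (Real.exp (2*Real.pi*μ) - Real.sinh (2*Real.pi*σ)^2) : ℂ)))
    (A : ℂ)
    (hA : A = -(2*(Real.pi:ℂ)*Complex.I) *
      (Complex.sinh (2*(Real.pi:ℂ)*t₀)
        / ((Real.cosh (2*Real.pi*σ) : ℂ) + Complex.cosh (2*(Real.pi:ℂ)*t₀)) + 1)) :
    Complex.exp (3*(Real.pi:ℂ)*Complex.I/4) * gQ μ t₀ * ((2*(Real.pi:ℂ)) ^ ((1:ℂ)/2))
        / ((-A) ^ ((1:ℂ)/2))
      = Complex.exp ((Real.pi:ℂ)*Complex.I/4) /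
          ((Real.sqrt 2 : ℂ) *
            (((Real.exp (2*Real.pi*μ) - Real.sinh (2*Real.pi*σ)^2) ^ ((1:ℝ)/4) : ℝ) : ℂ)) := by
  set c := Real.cosh (2 * π * σ)
  set E := Real.exp (2 * π * μ)
  set r := √(E - Real.sinh (2 * π * σ) ^ 2) with hr_def
  have hr : 0 < r := Real.sqrt_pos.2 (sub_pos.2 h)
  have hcr : (c : ℂ) ^ 2 + (r : ℂ) ^ 2 = 1 + E := by
    have := Real.cosh_sq (2 * π * σ)
    exact_mod_cast (by rw [hr_def, Real.sq_sqrt (sub_pos.2 h).le]; linarith :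
      c ^ 2 + r ^ 2 = 1 + E)
  set x : ℂ := c + I * r
  have hx : 0 < x.im := by simpa [x] using hr
  have hlog : 2 * π * t₀ = log (-x) := by
    rw [ht₀, show -(c : ℂ) - I * r = -x by ring]
    field_simp
  have hexp : exp (2 * π * t₀) = -(c : ℂ) - I * r := by
    rw [hlog, exp_log (neg_ne_zero.2 fun h0 => by simp [h0] at hx)]
    ring
  have hnegA : -A = ((4 * π * r / E : ℝ) : ℂ) * x := by
    rw [hA, sinh_div_add_cosh_add_one_of_exp_eq hexp hcr
      (by exact_mod_cast (Real.exp_pos _).ne'), hexp]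
    push_cast
    field_simp
    linear_combination (-4 * r * c / E - 4 * I * r ^ 2 / E) * I_sq
  have hg : gQ μ t₀ = -I * x ^ (1 / 2 : ℂ) * (Real.exp (-(π * μ)) : ℂ) := by
    rw [gQ, mul_sub, exp_sub, show (π : ℂ) * t₀ = log (-x) / 2 by rw [← hlog]; ring,
      exp_log_neg_div_two_of_im_pos hx, ofReal_exp, ofReal_neg, ofReal_mul, exp_neg,
      div_eq_mul_inv]
  rw [hg, hnegA, ← Real.sqrt_sqrt_eq_rpow_quarter (sub_pos.2 h).le, ← hr_def]
  exact exp_mul_amplitude_mul_sqrt_div_sqrt_eq (fun h0 => by simp [h0] at hx) hr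
end

section
/- For every t ∈ ℂ with −1/2 < Im t < 0: −π/2 < Im( πt − (1/2)·Log(1 − e^{2πt}) ) < 0, where Log is the principal logarithm. (Equivalently, the amplitude g(t) = e^{πt − (1/2)Log(1−e^{2πt})} has argument in (−π/2, 0) throughout the strip −1/2 < Im t < 0.) -/
open MeasureTheory

/-- the argument of the amplitude `g(t) = e^{πt - (1/2)Log(1-e^{2πt})}`
lies in `(-π/2, 0)` throughout the strip `-1/2 < Im t < 0`. -/
theorem gM_argument_range (t : ℂ) (h1 : -1/2 < t.im) (h2 : t.im < 0) :
    -Real.pi/2 < ((Real.pi:ℂ)*t - Complex.log (1 - Complex.exp (2*(Real.pi:ℂ)*t)) / 2).im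
    ∧ ((Real.pi:ℂ)*t - Complex.log (1 - Complex.exp (2*(Real.pi:ℂ)*t)) / 2).im < 0 := by
  have hπ := Real.pi_pos
  set θ : ℝ := 2 * Real.pi * t.im with hθdef
  have hθ1 : -Real.pi < θ := by rw [hθdef]; nlinarith
  have hθ2 : θ < 0 := by rw [hθdef]; nlinarith
  set r : ℝ := Real.exp (2 * Real.pi * t.re) with hrdef
  have hr : 0 < r := Real.exp_pos _
  set v : ℂ := Complex.exp (-(θ:ℂ) * Complex.I) - (r:ℂ) with hvdef
  have hvim : 0 < v.im := by
    have : v.im = Real.sin (-θ) := by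
      simp [hvdef, Complex.exp_ofReal_mul_I_im, ← Complex.ofReal_neg]
    rw [this]
    have := Real.sin_neg_of_neg_of_neg_pi_lt hθ2 hθ1
    rw [Real.sin_neg]; linarith
  have hvne : v ≠ 0 := by
    intro h; rw [h] at hvim; simp at hvim
  have hexp : Complex.exp (2*(Real.pi:ℂ)*t) = (r:ℂ) * Complex.exp ((θ:ℂ) * Complex.I) := by
    rw [hrdef, Complex.ofReal_exp, ← Complex.exp_add]
    congr 1
    apply Complex.ext <;> simp [hθdef] <;> push_cast <;> ring
  have hw : 1 - Complex.exp (2*(Real.pi:ℂ)*t) = Complex.exp ((θ:ℂ) * Complex.I) * v := by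
    rw [hexp, hvdef, mul_sub, ← Complex.exp_add]
    ring_nf
    rw [Complex.exp_zero]; ring
  have hargv1 : 0 < v.arg := by
    rcases lt_or_eq_of_le (Complex.arg_nonneg_iff.mpr hvim.le) with h | h
    · exact h
    · exfalso; have := (Complex.arg_eq_zero_iff.mp h.symm).2; linarith
  have hargv2 : v.arg < Real.pi := Complex.arg_lt_pi_iff.mpr (Or.inr hvim.ne')
  have hargexp : (Complex.exp ((θ:ℂ) * Complex.I)).arg = θ := by
    rw [Complex.exp_mul_I]
    exact Complex.arg_cos_add_sin_mul_I ⟨hθ1, by linarith⟩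
  have hargw : (1 - Complex.exp (2*(Real.pi:ℂ)*t)).arg = θ + v.arg := by
    rw [hw, Complex.arg_mul (Complex.exp_ne_zero _) hvne, hargexp]
    rw [hargexp]
    constructor <;> [linarith; linarith]
  have him : ((Real.pi:ℂ)*t - Complex.log (1 - Complex.exp (2*(Real.pi:ℂ)*t)) / 2).im
      = Real.pi * t.im - (θ + v.arg) / 2 := by
    rw [Complex.sub_im, ← hargw, ← Complex.log_im]
    simp [Complex.div_im, Complex.mul_im]
  rw [him, hθdef]
  constructor <;> [nlinarith; nlinarith]
end

section
/- Let ζ ∈ ℝ and ω ∈ ℂ with 0 < Im ω < 1/2. Then cosh(2π(ζ + Re ω)) − cos(2π Im ω) > 0, sinh(π(ζ+ω)) ≠ 0, and Im( e^{πζ}·cosh(πω)/sinh(π(ζ+ω)) ) = −e^{πζ}·cosh(πζ)·sin(2π Im ω) / ( cosh(2π(ζ + Re ω)) − cos(2π Im ω) ); in particular this imaginary part is strictly negative. -/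
open MeasureTheory

/-! With `w = π(ζ + ω)` one has `Im (z / w) = Im (z * conj w) / |w|²`, and the product-to-sum
formulas evaluate both pieces: `2 |sinh w|² = cosh (2 Re w) - cos (2 Im w)`, and, since `πζ` is
real, `πω + conj w` is real and `πω - conj w = 2πi Im ω - πζ`, so that
`2 Im (cosh (πω) * conj (sinh w)) = -cosh (πζ) sin (2π Im ω)`.
For `0 < Im ω < 1/2` the sine is positive, which also gives `cos (2π Im ω) < 1 ≤ cosh`. -/

open ComplexConjugate

theorem Real.cos_lt_cosh_of_sin_ne_zero (x : ℝ) {y : ℝ} (hy : sin y ≠ 0) : cos y < cosh x := by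
  nlinarith [sin_sq_add_cos_sq y, cos_le_one y, one_le_cosh x, pow_pos (abs_pos.2 hy) 2,
    sq_abs (sin y)]

namespace Complex

theorem two_mul_sinh_mul_sinh (x y : ℂ) : 2 * sinh x * sinh y = cosh (x + y) - cosh (x - y) := by
  rw [cosh_add, cosh_sub]; ring

theorem two_mul_cosh_mul_sinh (x y : ℂ) : 2 * cosh x * sinh y = sinh (x + y) - sinh (x - y) := by
  rw [sinh_add, sinh_sub]; ring

theorem normSq_sinh (z : ℂ) :
    normSq (sinh z) = (Real.cosh (2 * z.re) - Real.cos (2 * z.im)) / 2 := by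
  have h : 2 * (normSq (sinh z) : ℂ) = cosh (2 * z.re : ℝ) - cos (2 * z.im : ℝ) := by
    rw [← mul_conj, ← sinh_conj, ← mul_assoc, two_mul_sinh_mul_sinh, add_conj, sub_conj,
      cosh_mul_I]
  apply ofReal_injective
  push_cast [ofReal_cosh, ofReal_cos] at h ⊢
  linear_combination h / 2

theorem im_sinh_mul_I_sub_ofReal (t s : ℝ) : (sinh (t * I - s)).im = Real.cosh s * Real.sin t := by
  rw [sinh_sub, sinh_mul_I, cosh_mul_I, ← ofReal_sinh, ← ofReal_cosh, ← ofReal_sin, ← ofReal_cos]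
  simp only [sub_im, mul_im, ofReal_re, ofReal_im, I_re, I_im]
  ring

theorem im_cosh_mul_conj_sinh_ofReal_add (s : ℝ) (u : ℂ) :
    (cosh u * conj (sinh (s + u))).im = -(Real.cosh s * Real.sin (2 * u.im)) / 2 := by
  have h : 2 * (cosh u * conj (sinh (s + u))) =
      sinh (2 * u.re + s : ℝ) - sinh ((2 * u.im : ℝ) * I - s) := by
    rw [← sinh_conj, ← mul_assoc, two_mul_cosh_mul_sinh, map_add, conj_ofReal]
    congr 2
    · rw [add_left_comm, add_conj]; push_cast; ring
    · rw [sub_add_eq_sub_sub_swap, sub_conj]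
  have := congrArg im h
  rw [sub_im, im_sinh_mul_I_sub_ofReal, ← ofReal_sinh, ofReal_im, mul_im, re_ofNat, im_ofNat]
    at this
  linarith

theorem im_div_eq_im_mul_conj_div_normSq (z w : ℂ) :
    (z / w).im = (z * conj w).im / normSq w := by
  rw [div_eq_mul_inv, inv_def, ← mul_assoc, im_mul_ofReal, div_eq_mul_inv]

theorem im_exp_mul_cosh_div_sinh_ofReal_add (s : ℝ) (u : ℂ) :
    (exp s * cosh u / sinh (s + u)).im =
      -(Real.exp s * Real.cosh s * Real.sin (2 * u.im)) /
        (Real.cosh (2 * (s + u.re)) - Real.cos (2 * u.im)) := by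
  rw [← ofReal_exp, mul_div_assoc, im_ofReal_mul, im_div_eq_im_mul_conj_div_normSq,
    im_cosh_mul_conj_sinh_ofReal_add, normSq_sinh, add_re, add_im, ofReal_re, ofReal_im, zero_add,
    div_div_div_cancel_right₀ two_ne_zero]
  ring

end Complex

/-- the imaginary part of `e^{πζ} cosh(πω)/sinh(π(ζ+ω))` is
strictly negative for `ζ ∈ ℝ` and `0 < Im ω < 1/2`. -/
theorem M_saddle_argument_lower_half_plane (ζ : ℝ) (ω : ℂ)
    (hω1 : 0 < ω.im) (hω2 : ω.im < 1/2) :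
    0 < Real.cosh (2*Real.pi*(ζ + ω.re)) - Real.cos (2*Real.pi*ω.im) ∧
    Complex.sinh ((Real.pi:ℂ)*((ζ:ℂ)+ω)) ≠ 0 ∧
    (Complex.exp ((Real.pi:ℂ)*(ζ:ℂ)) * Complex.cosh ((Real.pi:ℂ)*ω)
        / Complex.sinh ((Real.pi:ℂ)*((ζ:ℂ)+ω))).im
      = -(Real.exp (Real.pi*ζ) * Real.cosh (Real.pi*ζ) * Real.sin (2*Real.pi*ω.im))
          / (Real.cosh (2*Real.pi*(ζ + ω.re)) - Real.cos (2*Real.pi*ω.im)) ∧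
    (Complex.exp ((Real.pi:ℂ)*(ζ:ℂ)) * Complex.cosh ((Real.pi:ℂ)*ω)
        / Complex.sinh ((Real.pi:ℂ)*((ζ:ℂ)+ω))).im < 0 := by
  have hsin : 0 < Real.sin (2*Real.pi*ω.im) :=
    Real.sin_pos_of_pos_of_lt_pi (by positivity) (by nlinarith [Real.pi_pos])
  have hden : 0 < Real.cosh (2*Real.pi*(ζ + ω.re)) - Real.cos (2*Real.pi*ω.im) :=
    sub_pos.2 (Real.cos_lt_cosh_of_sin_ne_zero _ hsin.ne')
  have hnormSq : Complex.normSq (Complex.sinh ((Real.pi:ℂ)*((ζ:ℂ)+ω))) =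
      (Real.cosh (2*Real.pi*(ζ + ω.re)) - Real.cos (2*Real.pi*ω.im)) / 2 := by
    rw [Complex.normSq_sinh, Complex.re_ofReal_mul, Complex.im_ofReal_mul, Complex.add_re,
      Complex.add_im, Complex.ofReal_re, Complex.ofReal_im, zero_add, ← mul_assoc, ← mul_assoc]
  have him : (Complex.exp ((Real.pi:ℂ)*(ζ:ℂ)) * Complex.cosh ((Real.pi:ℂ)*ω)
        / Complex.sinh ((Real.pi:ℂ)*((ζ:ℂ)+ω))).im
      = -(Real.exp (Real.pi*ζ) * Real.cosh (Real.pi*ζ) * Real.sin (2*Real.pi*ω.im))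
          / (Real.cosh (2*Real.pi*(ζ + ω.re)) - Real.cos (2*Real.pi*ω.im)) := by
    have h := Complex.im_exp_mul_cosh_div_sinh_ofReal_add (Real.pi * ζ) (Real.pi * ω)
    push_cast at h
    rw [mul_add, h, Complex.re_ofReal_mul, Complex.im_ofReal_mul]
    ring_nf
  refine ⟨hden, fun h => ?_, him,
    him ▸ div_neg_of_neg_of_pos (neg_neg_of_pos (by positivity)) hden⟩
  rw [h, map_zero] at hnormSq
  linarith
end
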